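/- Let (W_0, …, W_ℓ) be a ReLU network with m_0 input nodes, ℓ ≥ 1 hidden layers with m_1, …, m_ℓ hidden layer nodes, and a single output node, and let f_{ℓ+1}(x) denote its output value on x ∈ {0,1}^{m_0}. Then: (1) if (W_0, …, W_ℓ) is (ε, δ)-close to computing the constant 0-function, then for at least a (1 − δ)-fraction of the inputs x ∈ {0,1}^{m_0} the output value satisfies f_{ℓ+1}(x) ≤ 2·(ℓ+1)·ε·∏_{i=0}^ℓ m_i; and (2) if (W_0, …, W_ℓ) is (ε, δ)-close to computing the OR-function, then for at least a (1 − δ)-fraction of the inputs the output value satisfies f_{ℓ+1}(x) ≥ −2·(ℓ+1)·ε·∏_{i=0}^ℓ m_i. -/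

import Mathlib

open scoped Classical
open Finset

noncomputable section

/-- The ReLU activation function. -/
def relu (z : ℝ) : ℝ := max z 0

/-- Interpret a Boolean vector as a real 0/1 vector. -/
def bv {n : ℕ} (x : Fin n → Bool) : Fin n → ℝ := fun i => if x i then 1 else 0

/-- The values `f_i(x)` at the nodes of layer `i` of the multilayer ReLU network
`(W 0, W 1, …)` with layer sizes `m 0, m 1, …`: `f_0(x) = x` and
`f_{i+1}(x) = W_i · relu(f_i(x))`. -/
def netSeq (m : ℕ → ℕ) (W : ∀ i : ℕ, Matrix (Fin (m (i + 1))) (Fin (m i)) ℝ)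
    (x : Fin (m 0) → ℝ) : (i : ℕ) → Fin (m i) → ℝ
  | 0 => x
  | i + 1 => fun j => ∑ k, W i j k * relu (netSeq m W x i k)

/-- The output value `f_{ℓ+1}(x)` of a ReLU network with `ℓ` hidden layers and a single
output node (`m (ℓ+1) = 1`), written as the sum over the (single) output coordinate. -/
def outVal (ℓ : ℕ) (m : ℕ → ℕ) (W : ∀ i : ℕ, Matrix (Fin (m (i + 1))) (Fin (m i)) ℝ)
    (x : Fin (m 0) → Bool) : ℝ :=
  ∑ j, netSeq m W (bv x) (ℓ + 1) j

/-- The multilayer ReLU network `(W 0, …, W ℓ)` is `(ε, δ)`-close to computing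
`f : {0,1}^{m 0} → {0,1}`: one can change each matrix `W i` (`0 ≤ i ≤ ℓ`) in at most
`ε · m i · m (i+1)` entries (staying in `[-1,1]`) so that the Boolean function computed by
the resulting network disagrees with `f` on at most a `δ`-fraction of the `2^{m 0}` inputs. -/
def IsCloseML (ℓ : ℕ) (m : ℕ → ℕ) (W : ∀ i : ℕ, Matrix (Fin (m (i + 1))) (Fin (m i)) ℝ)
    (ε δ : ℝ) (f : (Fin (m 0) → Bool) → Bool) : Prop :=
  ∃ W' : ∀ i : ℕ, Matrix (Fin (m (i + 1))) (Fin (m i)) ℝ,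
    (∀ i ≤ ℓ, ∀ j k, |W' i j k| ≤ 1) ∧
    (∀ i ≤ ℓ,
      ((Finset.univ.filter
          (fun p : Fin (m (i + 1)) × Fin (m i) => W' i p.1 p.2 ≠ W i p.1 p.2)).card : ℝ)
        ≤ ε * m i * m (i + 1)) ∧
    (((Finset.univ.filter
        (fun x : Fin (m 0) → Bool => decide (0 < outVal ℓ m W' x) ≠ f x)).card : ℝ)
      ≤ δ * 2 ^ (m 0))

/-!
Changing a bounded-weight ReLU network in few entries moves its output value only a little:
in layer `i` the changed entries contribute at most `2 · ε · m i · m (i+1)` times the size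
`∏_{j<i} m j` of the incoming values, while the error already present is spread by the
`1`-Lipschitz ReLU over at most `m (i+1)` nodes. Summing over the `ℓ + 1` layers gives the
bound `2 · (ℓ+1) · ε · ∏_{i ≤ ℓ} m i`. On every input where the changed network agrees with
the target function its output has the right sign (or the input is `0`, where every network
outputs `0`), hence so has the original output up to that bound.
-/

lemma abs_relu_le (z : ℝ) : |relu z| ≤ |z| := by
  simpa [relu] using abs_max_sub_max_le_abs z 0 0

lemma abs_relu_sub_relu_le (a b : ℝ) : |relu a - relu b| ≤ |a - b| :=
  abs_max_sub_max_le_abs a b 0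

section Layer

variable {ι κ : Type*} [Fintype κ]

lemma abs_sum_mul_relu_le (A : Matrix ι κ ℝ) (hA : ∀ j k, |A j k| ≤ 1) (u : κ → ℝ) (M : ℝ)
    (hu : ∀ k, |u k| ≤ M) (j : ι) :
    |∑ k, A j k * relu (u k)| ≤ Fintype.card κ * M := by
  calc |∑ k, A j k * relu (u k)| ≤ ∑ k, |A j k * relu (u k)| := abs_sum_le_sum_abs _ _
    _ ≤ ∑ _k : κ, M := by
        refine sum_le_sum fun k _ => ?_
        rw [abs_mul]
        exact (mul_le_of_le_one_left (abs_nonneg _) (hA j k)).trans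
          ((abs_relu_le _).trans (hu k))
    _ = Fintype.card κ * M := by rw [sum_const, card_univ, nsmul_eq_mul]

variable [Fintype ι]

def changedEntries (A A' : Matrix ι κ ℝ) : Finset (ι × κ) :=
  univ.filter fun p => A' p.1 p.2 ≠ A p.1 p.2

lemma sum_abs_sub_le_two_mul_card_changedEntries (A A' : Matrix ι κ ℝ)
    (hA : ∀ j k, |A j k| ≤ 1) (hA' : ∀ j k, |A' j k| ≤ 1) :
    ∑ p : ι × κ, |A p.1 p.2 - A' p.1 p.2| ≤ 2 * #(changedEntries A A') := by
  calc ∑ p : ι × κ, |A p.1 p.2 - A' p.1 p.2|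
      = ∑ p ∈ changedEntries A A', |A p.1 p.2 - A' p.1 p.2| := by
        refine (sum_subset (filter_subset _ _) fun p _ hp => ?_).symm
        simp_all
    _ ≤ ∑ _p ∈ changedEntries A A', (2 : ℝ) := by
        refine sum_le_sum fun p _ => ?_
        linarith [abs_sub (A p.1 p.2) (A' p.1 p.2), hA p.1 p.2, hA' p.1 p.2]
    _ = 2 * #(changedEntries A A') := by rw [sum_const, nsmul_eq_mul, mul_comm]

lemma sum_abs_layer_sub_le (A A' : Matrix ι κ ℝ) (hA : ∀ j k, |A j k| ≤ 1)
    (hA' : ∀ j k, |A' j k| ≤ 1) (u v : κ → ℝ) (M : ℝ) (hM : 0 ≤ M) (hu : ∀ k, |u k| ≤ M) :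
    ∑ j, |∑ k, A j k * relu (u k) - ∑ k, A' j k * relu (v k)|
      ≤ 2 * #(changedEntries A A') * M + Fintype.card ι * ∑ k, |u k - v k| := by
  have row : ∀ j, |∑ k, A j k * relu (u k) - ∑ k, A' j k * relu (v k)|
      ≤ ∑ k, |A j k - A' j k| * M + ∑ k, |u k - v k| := by
    intro j
    rw [← sum_sub_distrib, ← sum_add_distrib]
    refine (abs_sum_le_sum_abs _ _).trans (sum_le_sum fun k _ => ?_)
    have weight : |(A j k - A' j k) * relu (u k)| ≤ |A j k - A' j k| * M := by
      rw [abs_mul]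
      gcongr
      exact (abs_relu_le _).trans (hu k)
    have input : |A' j k * (relu (u k) - relu (v k))| ≤ |u k - v k| := by
      rw [abs_mul]
      exact (mul_le_of_le_one_left (abs_nonneg _) (hA' j k)).trans (abs_relu_sub_relu_le _ _)
    calc |A j k * relu (u k) - A' j k * relu (v k)|
        = |(A j k - A' j k) * relu (u k) + A' j k * (relu (u k) - relu (v k))| := by ring_nf
      _ ≤ _ := (abs_add_le _ _).trans (add_le_add weight input)
  calc ∑ j, |∑ k, A j k * relu (u k) - ∑ k, A' j k * relu (v k)|
      ≤ ∑ j, (∑ k, |A j k - A' j k| * M + ∑ k, |u k - v k|) := sum_le_sum fun j _ => row j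
    _ = (∑ p : ι × κ, |A p.1 p.2 - A' p.1 p.2|) * M
          + Fintype.card ι * ∑ k, |u k - v k| := by
        rw [sum_add_distrib, sum_const, card_univ, nsmul_eq_mul, sum_mul,
          Fintype.sum_prod_type]
    _ ≤ _ := by
        gcongr
        exact sum_abs_sub_le_two_mul_card_changedEntries A A' hA hA'

end Layer

section Network

variable {m : ℕ → ℕ}

lemma abs_netSeq_le (W : ∀ i : ℕ, Matrix (Fin (m (i + 1))) (Fin (m i)) ℝ)
    {x : Fin (m 0) → ℝ} (hx : ∀ k, |x k| ≤ 1) (n : ℕ) (hW : ∀ i < n, ∀ j k, |W i j k| ≤ 1)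
    (k : Fin (m n)) : |netSeq m W x n k| ≤ ∏ i ∈ range n, (m i : ℝ) := by
  induction n with
  | zero => simpa [netSeq] using hx k
  | succ n ih =>
    calc |netSeq m W x (n + 1) k|
        ≤ m n * ∏ i ∈ range n, (m i : ℝ) := by
          simpa [netSeq] using abs_sum_mul_relu_le (W n) (hW n n.lt_succ_self) _ _
            (ih fun i hi => hW i (hi.trans n.lt_succ_self)) k
      _ = ∏ i ∈ range (n + 1), (m i : ℝ) := by rw [prod_range_succ, mul_comm]

lemma sum_abs_netSeq_sub_le (W W' : ∀ i : ℕ, Matrix (Fin (m (i + 1))) (Fin (m i)) ℝ)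
    {ε : ℝ} {x : Fin (m 0) → ℝ} (hx : ∀ k, |x k| ≤ 1) (n : ℕ)
    (hW : ∀ i < n, ∀ j k, |W i j k| ≤ 1) (hW' : ∀ i < n, ∀ j k, |W' i j k| ≤ 1)
    (hchanged : ∀ i < n, (#(changedEntries (W i) (W' i)) : ℝ) ≤ ε * m i * m (i + 1)) :
    ∑ j, |netSeq m W x n j - netSeq m W' x n j| ≤ 2 * ε * n * ∏ i ∈ range (n + 1), (m i : ℝ) := by
  induction n with
  | zero => simp [netSeq]
  | succ n ih =>
    have hn := n.lt_succ_self
    set M := ∏ i ∈ range n, (m i : ℝ)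
    have hM : 0 ≤ M := by positivity
    have hprev := ih (fun i hi => hW i (hi.trans hn)) (fun i hi => hW' i (hi.trans hn))
      (fun i hi => hchanged i (hi.trans hn))
    calc ∑ j, |netSeq m W x (n + 1) j - netSeq m W' x (n + 1) j|
        ≤ 2 * #(changedEntries (W n) (W' n)) * M
            + m (n + 1) * ∑ k, |netSeq m W x n k - netSeq m W' x n k| := by
          simpa only [netSeq, Fintype.card_fin] using
            sum_abs_layer_sub_le (W n) (W' n) (hW n hn) (hW' n hn) _ _ M hM
              (abs_netSeq_le W hx n fun i hi => hW i (hi.trans hn))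
      _ ≤ 2 * (ε * m n * m (n + 1)) * M + m (n + 1) * (2 * ε * n * (M * m n)) := by
          rw [← prod_range_succ]
          gcongr
          exact hchanged n hn
      _ = 2 * ε * ↑(n + 1) * ∏ i ∈ range (n + 1 + 1), (m i : ℝ) := by
          rw [prod_range_succ, prod_range_succ]
          push_cast
          ring

lemma abs_bv_le {n : ℕ} (x : Fin n → Bool) (k : Fin n) : |bv x k| ≤ 1 := by
  unfold bv
  split <;> simp

lemma abs_outVal_sub_le {ℓ : ℕ} (hm : m (ℓ + 1) = 1)
    {W W' : ∀ i : ℕ, Matrix (Fin (m (i + 1))) (Fin (m i)) ℝ}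
    (hW : ∀ i ≤ ℓ, ∀ j k, |W i j k| ≤ 1) (hW' : ∀ i ≤ ℓ, ∀ j k, |W' i j k| ≤ 1) {ε : ℝ}
    (hchanged : ∀ i ≤ ℓ, (#(changedEntries (W i) (W' i)) : ℝ) ≤ ε * m i * m (i + 1))
    (x : Fin (m 0) → Bool) :
    |outVal ℓ m W x - outVal ℓ m W' x|
      ≤ 2 * ((ℓ : ℝ) + 1) * ε * ∏ i ∈ range (ℓ + 1), (m i : ℝ) := by
  have hlayers := sum_abs_netSeq_sub_le W W' (abs_bv_le x) (ℓ + 1)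
    (fun i hi => hW i (Nat.lt_succ_iff.mp hi)) (fun i hi => hW' i (Nat.lt_succ_iff.mp hi))
    (fun i hi => hchanged i (Nat.lt_succ_iff.mp hi))
  have hprod : ∏ i ∈ range (ℓ + 1 + 1), (m i : ℝ) = ∏ i ∈ range (ℓ + 1), (m i : ℝ) := by
    rw [prod_range_succ _ (ℓ + 1), hm, Nat.cast_one, mul_one]
  rw [hprod] at hlayers
  calc |outVal ℓ m W x - outVal ℓ m W' x|
      ≤ ∑ j, |netSeq m W (bv x) (ℓ + 1) j - netSeq m W' (bv x) (ℓ + 1) j| := by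
        rw [outVal, outVal, ← sum_sub_distrib]
        exact abs_sum_le_sum_abs _ _
    _ ≤ _ := hlayers.trans_eq (by push_cast; ring)

lemma netSeq_zero_input (W : ∀ i : ℕ, Matrix (Fin (m (i + 1))) (Fin (m i)) ℝ) (n : ℕ) :
    netSeq m W 0 n = 0 := by
  induction n with
  | zero => rfl
  | succ n ih => funext j; simp [netSeq, ih, relu]

lemma outVal_eq_zero_of_forall_eq_false {ℓ : ℕ}
    (W : ∀ i : ℕ, Matrix (Fin (m (i + 1))) (Fin (m i)) ℝ) {x : Fin (m 0) → Bool}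
    (hx : ∀ i, x i = false) : outVal ℓ m W x = 0 := by
  have : bv x = 0 := funext fun i => by simp [bv, hx i]
  simp [outVal, this, netSeq_zero_input]

end Network

lemma one_sub_mul_card_le_card_of_compl_subset {α : Type*} [Fintype α] {δ : ℝ}
    {S T : Finset α} (hS : (#S : ℝ) ≤ δ * Fintype.card α) (hST : Sᶜ ⊆ T) :
    (1 - δ) * Fintype.card α ≤ #T := by
  have hcompl : (#Sᶜ : ℝ) = Fintype.card α - #S := by
    rw [card_compl, Nat.cast_sub (card_le_univ S)]
  have : (#Sᶜ : ℝ) ≤ #T := by exact_mod_cast card_le_card hST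
  linarith

theorem close_multilayer_output_bound_general (ℓ : ℕ) (m : ℕ → ℕ) (hm : m (ℓ + 1) = 1)
    (W : ∀ i : ℕ, Matrix (Fin (m (i + 1))) (Fin (m i)) ℝ)
    (hW : ∀ i ≤ ℓ, ∀ j k, |W i j k| ≤ 1)
    (ε δ : ℝ) :
    (IsCloseML ℓ m W ε δ (fun _ => false) →
      (1 - δ) * 2 ^ (m 0) ≤
        ((Finset.univ.filter (fun x : Fin (m 0) → Bool =>
          outVal ℓ m W x ≤
            2 * ((ℓ : ℝ) + 1) * ε * ∏ i ∈ Finset.range (ℓ + 1), (m i : ℝ))).card : ℝ)) ∧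
    (IsCloseML ℓ m W ε δ (fun x => decide (∃ i, x i = true)) →
      (1 - δ) * 2 ^ (m 0) ≤
        ((Finset.univ.filter (fun x : Fin (m 0) → Bool =>
          -(2 * ((ℓ : ℝ) + 1) * ε * ∏ i ∈ Finset.range (ℓ + 1), (m i : ℝ))
            ≤ outVal ℓ m W x)).card : ℝ)) := by
  have hcard : (Fintype.card (Fin (m 0) → Bool) : ℝ) = 2 ^ m 0 := by simp
  constructor
  · rintro ⟨W', hW', hchanged, herr⟩
    rw [← hcard] at herr ⊢
    refine one_sub_mul_card_le_card_of_compl_subset herr fun x hx => ?_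
    have hclose := abs_le.mp (abs_outVal_sub_le hm hW hW' hchanged x)
    simp only [mem_compl, mem_filter, mem_univ, true_and, not_not] at hx ⊢
    have : ¬ 0 < outVal ℓ m W' x := by simpa using hx
    linarith
  · rintro ⟨W', hW', hchanged, herr⟩
    rw [← hcard] at herr ⊢
    refine one_sub_mul_card_le_card_of_compl_subset herr fun x hx => ?_
    have hclose := abs_le.mp (abs_outVal_sub_le hm hW hW' hchanged x)
    simp only [mem_compl, mem_filter, mem_univ, true_and, not_not] at hx ⊢
    by_cases hx0 : ∀ i, x i = false
    · rw [outVal_eq_zero_of_forall_eq_false W hx0]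
      linarith
    · have : 0 < outVal ℓ m W' x := (decide_eq_decide.mp hx).mpr (by simpa using hx0)
      linarith

/-- If the multilayer ReLU network `(W 0, …, W ℓ)` (single output) is
`(ε, δ)`-close to computing the constant 0-function, then for at least a `(1−δ)`-fraction
of the inputs the output value is at most `2·(ℓ+1)·ε·∏_{i=0}^ℓ m i`; if it is
`(ε, δ)`-close to computing the OR-function, then for at least a `(1−δ)`-fraction of the
inputs the output value is at least `−2·(ℓ+1)·ε·∏_{i=0}^ℓ m i`. -/
theorem close_multilayer_output_bound (ℓ : ℕ) (hℓ : 1 ≤ ℓ) (m : ℕ → ℕ) (hm : m (ℓ + 1) = 1)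
    (W : ∀ i : ℕ, Matrix (Fin (m (i + 1))) (Fin (m i)) ℝ)
    (hW : ∀ i ≤ ℓ, ∀ j k, |W i j k| ≤ 1)
    (ε δ : ℝ) :
    (IsCloseML ℓ m W ε δ (fun _ => false) →
      (1 - δ) * 2 ^ (m 0) ≤
        ((Finset.univ.filter (fun x : Fin (m 0) → Bool =>
          outVal ℓ m W x ≤
            2 * ((ℓ : ℝ) + 1) * ε * ∏ i ∈ Finset.range (ℓ + 1), (m i : ℝ))).card : ℝ)) ∧
    (IsCloseML ℓ m W ε δ (fun x => decide (∃ i, x i = true)) →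
      (1 - δ) * 2 ^ (m 0) ≤
        ((Finset.univ.filter (fun x : Fin (m 0) → Bool =>
          -(2 * ((ℓ : ℝ) + 1) * ε * ∏ i ∈ Finset.range (ℓ + 1), (m i : ℝ))
            ≤ outVal ℓ m W x)).card : ℝ)) :=
  close_multilayer_output_bound_general ℓ m hm W hW ε δ
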